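/- For any real numbers a ≥ b ≥ 0, any β < 0 and any H > 0 with a, b ≤ H, one has (a − b)/Φ_H(β) ≤ H·(e^{βb} − e^{βa})/(1 − e^{βH}), where Φ_H(β) = (e^{|β|H} − 1)/(|β|H). -/

import Mathlib

/-!
Write `c = |β| = -β`. Since `1 - e^{βH} = e^{βH} (e^{cH} - 1)`, the claim reduces to
`c (a - b) e^{βH} ≤ e^{βb} - e^{βa}`. This follows from the tangent-line bound for the convex
function `exp` at `βa`, together with `e^{βa} ≥ e^{βH}` because `βa ≥ βH`.
-/

open Real

theorem Real.exp_mul_sub_le_exp_sub_exp (x y : ℝ) : exp x * (y - x) ≤ exp y - exp x := by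
  have h := mul_le_mul_of_nonneg_left (add_one_le_exp (y - x)) (exp_pos x).le
  rw [← exp_add, add_sub_cancel] at h
  linarith

theorem Real.one_sub_exp_eq_exp_mul (x : ℝ) : 1 - exp x = exp x * (exp (-x) - 1) := by
  rw [mul_sub, ← exp_add, add_neg_cancel, exp_zero, mul_one]

theorem Real.neg_mul_sub_mul_exp_le_exp_sub_exp {a b β H : ℝ} (hab : b ≤ a) (hβ : β ≤ 0)
    (ha : a ≤ H) : -β * (a - b) * exp (β * H) ≤ exp (β * b) - exp (β * a) :=
  calc -β * (a - b) * exp (β * H) ≤ exp (β * a) * (β * b - β * a) := by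
        rw [mul_comm, show β * b - β * a = -β * (a - b) by ring]
        exact mul_le_mul_of_nonneg_right (exp_le_exp.2 (mul_le_mul_of_nonpos_left ha hβ))
          (mul_nonneg (neg_nonneg.2 hβ) (sub_nonneg.2 hab))
    _ ≤ exp (β * b) - exp (β * a) := exp_mul_sub_le_exp_sub_exp _ _

theorem normalized_gap_bound_neg_general (a b β H : ℝ)
    (hab : a ≥ b) (hβ : β < 0) (hH : 0 < H) (ha : a ≤ H) :
    (a - b) / ((Real.exp (|β| * H) - 1) / (|β| * H)) ≤
      H * (Real.exp (β * b) - Real.exp (β * a)) / (1 - Real.exp (β * H)) := by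
  have hcH : 0 < -β * H := mul_pos (neg_pos.2 hβ) hH
  have hden : 0 < exp (-β * H) - 1 := sub_pos.2 (one_lt_exp_iff.2 hcH)
  rw [abs_of_neg hβ, one_sub_exp_eq_exp_mul, neg_mul_eq_neg_mul, div_div_eq_mul_div,
    ← div_div]
  refine div_le_div_of_nonneg_right ?_ hden.le
  rw [le_div_iff₀ (exp_pos _)]
  linarith [mul_le_mul_of_nonneg_left (neg_mul_sub_mul_exp_le_exp_sub_exp hab hβ.le ha) hH.le]

theorem normalized_gap_bound_neg (a b β H : ℝ)
    (hab : a ≥ b) (hb : b ≥ 0) (hβ : β < 0) (hH : 0 < H) (ha : a ≤ H) (hbH : b ≤ H) :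
    (a - b) / ((Real.exp (|β| * H) - 1) / (|β| * H)) ≤
      H * (Real.exp (β * b) - Real.exp (β * a)) / (1 - Real.exp (β * H)) :=
  normalized_gap_bound_neg_general a b β H hab hβ hH ha
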